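/- Let α > 1, 0 < c₁ ≤ c₂, μ ∈ (0,1], θ > 0, and let F : (0,∞) → (0,∞) satisfy c₁x^α ≤ F(x) ≤ c₂x^α for all x > 0. Let (r(j))_{j≥0} be independent exponential random variables with E[r(j)] = 1/(μ F(j + θ)), and for each n let R_n = ∑_{j=n}^∞ r(j). Then there exists n₀ such that for all n > n₀, P(|R_n / E[R_n] − 1| > n^{-1/4}) ≤ e^{-n^{1/4}}. -/

import Mathlib

/-!
With rates `λ j = μ F (j + θ)`, the tail `R n = ∑_{j ≥ n} r j` has mean `m = ∑_{j ≥ n} (λ j)⁻¹`,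
and every rate in it is at least `L = μ c₁ (n + θ) ^ α`. The Chernoff bound with parameter
`t = ±δ L / 4`, together with `λ / (λ - t) ≤ exp ((t + 2 t² / L) / λ)` and
`λ / (λ + t) ≤ exp ((-t + t² / L) / λ)`, bounds both tails of `R n / m` at `1 ± δ` by
`exp (-δ² L m / 8)`; the exponential moment of the infinite sum is controlled by those of its
partial sums through Fatou's lemma. The first `n` terms of the tail already give `L m ≥ K n` for
a constant `K > 0`, so for `δ = n ^ (-1/4)` the exponent is of order `√n`, which eventually
exceeds `n ^ (1/4) + log 2`.
-/

open MeasureTheory ProbabilityTheory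

/-- `X` is exponentially distributed with rate `l` under `P`. -/
def IsExponentialRV {Ω : Type*} [MeasurableSpace Ω] (P : Measure Ω) (X : Ω → ℝ) (l : ℝ) : Prop :=
  Measure.map X P = expMeasure l

open Real Filter Topology
open scoped ENNReal

namespace ProbabilityTheory

lemma expMeasure_eq_withDensity (l : ℝ) : expMeasure l = volume.withDensity (exponentialPDF l) :=
  rfl

lemma measurable_exponentialPDF (l : ℝ) : Measurable (exponentialPDF l) :=
  (measurable_exponentialPDFReal l).ennreal_ofReal

lemma exponentialPDF_mul_ofReal_exp_mul {l t : ℝ} (ht : t < l) (x : ℝ) :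
    exponentialPDF l x * ENNReal.ofReal (exp (t * x)) =
      ENNReal.ofReal (l / (l - t)) * exponentialPDF (l - t) x := by
  rcases lt_or_ge x 0 with hx | hx
  · simp [exponentialPDF_of_neg hx]
  rw [exponentialPDF_of_nonneg hx, exponentialPDF_of_nonneg hx,
    ← ENNReal.ofReal_mul' (exp_pos _).le,
    ← ENNReal.ofReal_mul' (mul_pos (sub_pos.2 ht) (exp_pos _)).le]
  congr 1
  rw [← mul_assoc, div_mul_cancel₀ _ (sub_pos.2 ht).ne', mul_assoc, ← exp_add]
  ring_nf

lemma exponentialPDF_mul_ofReal {l : ℝ} (hl : 0 < l) (x : ℝ) :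
    exponentialPDF l x * ENNReal.ofReal x = ENNReal.ofReal l⁻¹ * gammaPDF 2 l x := by
  rcases lt_or_ge x 0 with hx | hx
  · simp [exponentialPDF_of_neg hx, gammaPDF_of_neg hx]
  rw [exponentialPDF_of_nonneg hx, gammaPDF_of_nonneg hx, ← ENNReal.ofReal_mul' hx,
    ← ENNReal.ofReal_mul (by positivity)]
  congr 1
  norm_num [Gamma_two]
  field_simp

lemma lintegral_exp_mul_expMeasure {l t : ℝ} (ht : t < l) :
    ∫⁻ x, ENNReal.ofReal (exp (t * x)) ∂expMeasure l = ENNReal.ofReal (l / (l - t)) := by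
  rw [expMeasure_eq_withDensity,
    lintegral_withDensity_eq_lintegral_mul _ (measurable_exponentialPDF l) (by fun_prop)]
  simp_rw [Pi.mul_apply, exponentialPDF_mul_ofReal_exp_mul ht]
  rw [lintegral_const_mul' _ _ ENNReal.ofReal_ne_top,
    lintegral_exponentialPDF_eq_one (sub_pos.2 ht), mul_one]

lemma lintegral_ofReal_expMeasure {l : ℝ} (hl : 0 < l) :
    ∫⁻ x, ENNReal.ofReal x ∂expMeasure l = ENNReal.ofReal l⁻¹ := by
  rw [expMeasure_eq_withDensity,
    lintegral_withDensity_eq_lintegral_mul _ (measurable_exponentialPDF l) (by fun_prop)]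
  simp_rw [Pi.mul_apply, exponentialPDF_mul_ofReal hl]
  rw [lintegral_const_mul' _ _ ENNReal.ofReal_ne_top, lintegral_gammaPDF_eq_one two_pos hl, mul_one]

lemma ae_nonneg_expMeasure (l : ℝ) : ∀ᵐ x ∂expMeasure l, 0 ≤ x := by
  rw [expMeasure_eq_withDensity, ae_withDensity_iff (measurable_exponentialPDF l)]
  exact ae_of_all _ fun x hx => not_lt.1 fun hneg => hx (exponentialPDF_of_neg hneg)

end ProbabilityTheory

namespace IsExponentialRV

variable {Ω : Type*} [MeasurableSpace Ω] {P : Measure Ω} {X : Ω → ℝ} {l t : ℝ}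

lemma aemeasurable (hX : IsExponentialRV P X l) (hl : 0 < l) : AEMeasurable X P := by
  by_contra hX_meas
  have := isProbabilityMeasure_expMeasure hl
  have hzero : expMeasure l = 0 := by
    rw [← hX, Measure.map_of_not_aemeasurable hX_meas]
  exact IsProbabilityMeasure.ne_zero _ hzero

lemma ae_nonneg (hX : IsExponentialRV P X l) (hl : 0 < l) : ∀ᵐ ω ∂P, 0 ≤ X ω :=
  ae_of_ae_map (hX.aemeasurable hl) (hX ▸ ae_nonneg_expMeasure l)

lemma lintegral_exp_mul (hX : IsExponentialRV P X l) (hl : 0 < l) (ht : t < l) :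
    ∫⁻ ω, ENNReal.ofReal (exp (t * X ω)) ∂P = ENNReal.ofReal (l / (l - t)) := by
  rw [← lintegral_exp_mul_expMeasure ht, ← hX, lintegral_map' (by fun_prop) (hX.aemeasurable hl)]

lemma lintegral_ofReal (hX : IsExponentialRV P X l) (hl : 0 < l) :
    ∫⁻ ω, ENNReal.ofReal (X ω) ∂P = ENNReal.ofReal l⁻¹ := by
  rw [← lintegral_ofReal_expMeasure hl, ← hX, lintegral_map' (by fun_prop) (hX.aemeasurable hl)]

lemma mgf_eq (hX : IsExponentialRV P X l) (hl : 0 < l) (ht : t < l) :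
    mgf X P t = l / (l - t) := by
  rw [mgf, integral_eq_lintegral_of_nonneg_ae (ae_of_all _ fun _ => (exp_pos _).le)
    ((hX.aemeasurable hl).const_mul t).exp.aestronglyMeasurable, hX.lintegral_exp_mul hl ht,
    ENNReal.toReal_ofReal (div_nonneg hl.le (sub_pos.2 ht).le)]

lemma integral_eq (hX : IsExponentialRV P X l) (hl : 0 < l) : ∫ ω, X ω ∂P = l⁻¹ := by
  rw [integral_eq_lintegral_of_nonneg_ae (hX.ae_nonneg hl)
    (hX.aemeasurable hl).aestronglyMeasurable, hX.lintegral_ofReal hl,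
    ENNReal.toReal_ofReal (inv_nonneg.2 hl.le)]

end IsExponentialRV

lemma one_div_one_sub_le_exp {x : ℝ} (hx : x ≤ 1 / 2) :
    1 / (1 - x) ≤ exp (x + 2 * x ^ 2) := by
  -- `(1 - x) (1 + x + 2x²) = 1 + x² (1 - 2x) ≥ 1`
  calc 1 / (1 - x) ≤ x + 2 * x ^ 2 + 1 := by
        rw [div_le_iff₀ (by linarith)]
        nlinarith [mul_nonneg (sq_nonneg x) (by linarith : 0 ≤ 1 - 2 * x)]
    _ ≤ exp (x + 2 * x ^ 2) := add_one_le_exp _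

lemma one_div_one_add_le_exp {x : ℝ} (hx₀ : 0 ≤ x) : 1 / (1 + x) ≤ exp (-x + x ^ 2) := by
  -- `(1 + x) (1 - x + x²) = 1 + x³ ≥ 1`
  calc 1 / (1 + x) ≤ -x + x ^ 2 + 1 := by
        rw [div_le_iff₀ (by linarith)]
        nlinarith [pow_nonneg hx₀ 3]
    _ ≤ exp (-x + x ^ 2) := add_one_le_exp _

lemma div_sq_le_sq_div_mul_inv {l t L : ℝ} (hL : 0 < L) (hLl : L ≤ l) :
    (t / l) ^ 2 ≤ t ^ 2 / L * l⁻¹ := by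
  have hl : 0 < l := hL.trans_le hLl
  rw [div_pow, sq l, ← div_div, div_eq_mul_inv _ l]
  gcongr

lemma div_sub_le_exp_mul_inv {l t L : ℝ} (hL : 0 < L) (hLl : L ≤ l) (ht : 2 * t ≤ L) :
    l / (l - t) ≤ exp ((t + 2 * t ^ 2 / L) * l⁻¹) := by
  have hl : 0 < l := hL.trans_le hLl
  have hx : t / l ≤ 1 / 2 := by
    rw [div_le_iff₀ hl]
    linarith
  calc l / (l - t) = 1 / (1 - t / l) := by field_simp
    _ ≤ exp (t / l + 2 * (t / l) ^ 2) := one_div_one_sub_le_exp hx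
    _ ≤ exp ((t + 2 * t ^ 2 / L) * l⁻¹) := by
        gcongr exp ?_
        calc t / l + 2 * (t / l) ^ 2 ≤ t / l + 2 * (t ^ 2 / L * l⁻¹) := by
              gcongr
              exact div_sq_le_sq_div_mul_inv hL hLl
          _ = (t + 2 * t ^ 2 / L) * l⁻¹ := by ring

lemma div_add_le_exp_mul_inv {l t L : ℝ} (hL : 0 < L) (hLl : L ≤ l) (ht₀ : 0 ≤ t) :
    l / (l + t) ≤ exp ((-t + t ^ 2 / L) * l⁻¹) := by
  have hl : 0 < l := hL.trans_le hLl
  calc l / (l + t) = 1 / (1 + t / l) := by field_simp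
    _ ≤ exp (-(t / l) + (t / l) ^ 2) := one_div_one_add_le_exp (by positivity)
    _ ≤ exp ((-t + t ^ 2 / L) * l⁻¹) := by
        gcongr exp ?_
        calc -(t / l) + (t / l) ^ 2 ≤ -(t / l) + t ^ 2 / L * l⁻¹ := by
              gcongr
              exact div_sq_le_sq_div_mul_inv hL hLl
          _ = (-t + t ^ 2 / L) * l⁻¹ := by ring

/-- The Chernoff bound, in a form that needs no integrability. -/
lemma measure_ge_le_exp_mul_lintegral {Ω : Type*} [MeasurableSpace Ω] {P : Measure Ω}
    {Y : Ω → ℝ} (hY : AEMeasurable Y P) (a : ℝ) {t : ℝ} (ht : 0 ≤ t) :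
    P {ω | a ≤ Y ω} ≤
      ENNReal.ofReal (exp (-(t * a))) * ∫⁻ ω, ENNReal.ofReal (exp (t * Y ω)) ∂P := by
  have hmarkov := mul_meas_ge_le_lintegral₀ ((hY.const_mul t).exp.ennreal_ofReal)
    (ENNReal.ofReal (exp (t * a)))
  calc P {ω | a ≤ Y ω}
      ≤ P {ω | ENNReal.ofReal (exp (t * a)) ≤ ENNReal.ofReal (exp (t * Y ω))} :=
        measure_mono fun ω h => ENNReal.ofReal_le_ofReal (exp_le_exp.2 (by gcongr; exact h))
    _ = ENNReal.ofReal (exp (-(t * a))) * (ENNReal.ofReal (exp (t * a)) *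
          P {ω | ENNReal.ofReal (exp (t * a)) ≤ ENNReal.ofReal (exp (t * Y ω))}) := by
        rw [← mul_assoc, ← ENNReal.ofReal_mul (exp_pos _).le, ← exp_add, neg_add_cancel, exp_zero,
          ENNReal.ofReal_one, one_mul]
    _ ≤ _ := by gcongr

section ExponentialSeries

variable {Ω : Type*} [MeasurableSpace Ω] {P : Measure Ω} {X : ℕ → Ω → ℝ} {l : ℕ → ℝ}

lemma ae_summable_of_isExponentialRV (hX : ∀ j, IsExponentialRV P (X j) (l j))
    (hl : ∀ j, 0 < l j) (hsum : Summable fun j => (l j)⁻¹) :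
    ∀ᵐ ω ∂P, Summable fun j => X j ω := by
  have hnonneg : ∀ᵐ ω ∂P, ∀ j, 0 ≤ X j ω := ae_all_iff.2 fun j => (hX j).ae_nonneg (hl j)
  have hmeas : ∀ j, AEMeasurable (fun ω => ENNReal.ofReal (X j ω)) P :=
    fun j => ((hX j).aemeasurable (hl j)).ennreal_ofReal
  have hfin : ∫⁻ ω, ∑' j, ENNReal.ofReal (X j ω) ∂P ≠ ∞ := by
    rw [lintegral_tsum hmeas, tsum_congr fun j => (hX j).lintegral_ofReal (hl j),
      ← ENNReal.ofReal_tsum_of_nonneg (fun j => (inv_pos.2 (hl j)).le) hsum]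
    exact ENNReal.ofReal_ne_top
  filter_upwards [hnonneg, ae_lt_top' (AEMeasurable.tsum hmeas) hfin] with ω h₀ hlt
  exact (ENNReal.summable_toReal hlt.ne).congr fun j => ENNReal.toReal_ofReal (h₀ j)

lemma integral_tsum_of_isExponentialRV (hX : ∀ j, IsExponentialRV P (X j) (l j))
    (hl : ∀ j, 0 < l j) (hsum : Summable fun j => (l j)⁻¹) :
    ∫ ω, ∑' j, X j ω ∂P = ∑' j, (l j)⁻¹ := by
  have henorm : ∀ j, ∫⁻ ω, ‖X j ω‖ₑ ∂P = ENNReal.ofReal (l j)⁻¹ := fun j => by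
    rw [← (hX j).lintegral_ofReal (hl j)]
    exact lintegral_congr_ae (((hX j).ae_nonneg (hl j)).mono fun ω h => Real.enorm_eq_ofReal h)
  rw [integral_tsum (fun j => ((hX j).aemeasurable (hl j)).aestronglyMeasurable)]
  · exact tsum_congr fun j => (hX j).integral_eq (hl j)
  · rw [tsum_congr henorm, ← ENNReal.ofReal_tsum_of_nonneg (fun j => (inv_pos.2 (hl j)).le) hsum]
    exact ENNReal.ofReal_ne_top

lemma lintegral_exp_mul_sum_range_of_isExponentialRV (hind : iIndepFun X P)
    (hX : ∀ j, IsExponentialRV P (X j) (l j)) (hl : ∀ j, 0 < l j) {t : ℝ} (ht : ∀ j, t < l j)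
    (k : ℕ) :
    ∫⁻ ω, ENNReal.ofReal (exp (t * ∑ j ∈ Finset.range k, X j ω)) ∂P =
      ENNReal.ofReal (∏ j ∈ Finset.range k, l j / (l j - t)) := by
  have := hind.isProbabilityMeasure
  have hmgf : mgf (∑ j ∈ Finset.range k, X j) P t = ∏ j ∈ Finset.range k, l j / (l j - t) := by
    rw [hind.mgf_sum₀ fun j => (hX j).aemeasurable (hl j)]
    exact Finset.prod_congr rfl fun j _ => (hX j).mgf_eq (hl j) (ht j)
  -- a positive `mgf` is the integral of an integrable function
  have hint : Integrable (fun ω => exp (t * (∑ j ∈ Finset.range k, X j) ω)) P :=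
    mgf_pos_iff.1 (hmgf ▸ Finset.prod_pos fun j _ => div_pos (hl j) (sub_pos.2 (ht j)))
  rw [← hmgf, mgf, ofReal_integral_eq_lintegral_ofReal hint (ae_of_all _ fun _ => (exp_pos _).le)]
  simp only [Finset.sum_apply]

lemma lintegral_exp_mul_tsum_le (hind : iIndepFun X P) (hX : ∀ j, IsExponentialRV P (X j) (l j))
    (hl : ∀ j, 0 < l j) (hsum : Summable fun j => (l j)⁻¹) {t c : ℝ} (ht : ∀ j, t < l j)
    (hc : ∀ j, l j / (l j - t) ≤ exp (c * (l j)⁻¹)) :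
    ∫⁻ ω, ENNReal.ofReal (exp (t * ∑' j, X j ω)) ∂P ≤ ENNReal.ofReal (exp (c * ∑' j, (l j)⁻¹)) := by
  set f : ℕ → Ω → ℝ≥0∞ := fun k ω => ENNReal.ofReal (exp (t * ∑ j ∈ Finset.range k, X j ω))
  have hcont : ∀ a : ℝ, Continuous fun x => ENNReal.ofReal (exp (a * x)) := fun a =>
    ENNReal.continuous_ofReal.comp (continuous_exp.comp (continuous_const_mul a))
  have hf : ∀ k, AEMeasurable (f k) P := fun k =>
    ((Finset.aemeasurable_fun_sum _ fun j _ => (hX j).aemeasurable (hl j)).const_mul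
      t).exp.ennreal_ofReal
  have hlim : ∀ᵐ ω ∂P,
      ENNReal.ofReal (exp (t * ∑' j, X j ω)) = liminf (fun k => f k ω) atTop := by
    filter_upwards [ae_summable_of_isExponentialRV hX hl hsum] with ω hω
    exact (((hcont t).tendsto _).comp hω.hasSum.tendsto_sum_nat).liminf_eq.symm
  have hbound : ∀ k, ∫⁻ ω, f k ω ∂P ≤
      ENNReal.ofReal (exp (c * ∑ j ∈ Finset.range k, (l j)⁻¹)) := fun k => by
    rw [lintegral_exp_mul_sum_range_of_isExponentialRV hind hX hl ht k, Finset.mul_sum, exp_sum]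
    exact ENNReal.ofReal_le_ofReal
      (Finset.prod_le_prod (fun j _ => (div_pos (hl j) (sub_pos.2 (ht j))).le) fun j _ => hc j)
  have hconv : Tendsto (fun k => ENNReal.ofReal (exp (c * ∑ j ∈ Finset.range k, (l j)⁻¹))) atTop
      (𝓝 (ENNReal.ofReal (exp (c * ∑' j, (l j)⁻¹)))) :=
    ((hcont c).tendsto _).comp hsum.hasSum.tendsto_sum_nat
  calc ∫⁻ ω, ENNReal.ofReal (exp (t * ∑' j, X j ω)) ∂P
      = ∫⁻ ω, liminf (fun k => f k ω) atTop ∂P := lintegral_congr_ae hlim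
    _ ≤ liminf (fun k => ∫⁻ ω, f k ω ∂P) atTop := lintegral_liminf_le' hf
    _ ≤ liminf (fun k => ENNReal.ofReal (exp (c * ∑ j ∈ Finset.range k, (l j)⁻¹))) atTop :=
        liminf_le_liminf (Eventually.of_forall hbound)
    _ = ENNReal.ofReal (exp (c * ∑' j, (l j)⁻¹)) := hconv.liminf_eq

lemma measure_tsum_ge_le (hind : iIndepFun X P) (hX : ∀ j, IsExponentialRV P (X j) (l j))
    (hl : ∀ j, 0 < l j) (hsum : Summable fun j => (l j)⁻¹) {L δ : ℝ} (hL : 0 < L)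
    (hLl : ∀ j, L ≤ l j) (hδ : 0 ≤ δ) (hδ₂ : δ ≤ 2) :
    P {ω | (1 + δ) * ∑' j, (l j)⁻¹ ≤ ∑' j, X j ω} ≤
      ENNReal.ofReal (exp (-(δ ^ 2 * (L * ∑' j, (l j)⁻¹) / 8))) := by
  set m := ∑' j, (l j)⁻¹
  set t := δ * L / 4 with ht
  have ht₀ : 0 ≤ t := by positivity
  have ht₂ : 2 * t ≤ L := by nlinarith
  have hS : AEMeasurable (fun ω => ∑' j, X j ω) P :=
    AEMeasurable.tsum fun j => (hX j).aemeasurable (hl j)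
  have hmgf := lintegral_exp_mul_tsum_le hind hX hl hsum (c := t + 2 * t ^ 2 / L)
    (fun j => by linarith [hLl j]) (fun j => div_sub_le_exp_mul_inv hL (hLl j) ht₂)
  calc P {ω | (1 + δ) * m ≤ ∑' j, X j ω}
      ≤ ENNReal.ofReal (exp (-(t * ((1 + δ) * m)))) *
          ENNReal.ofReal (exp ((t + 2 * t ^ 2 / L) * m)) :=
        (measure_ge_le_exp_mul_lintegral hS _ ht₀).trans (by gcongr)
    _ = ENNReal.ofReal (exp (-(δ ^ 2 * (L * m) / 8))) := by
        rw [← ENNReal.ofReal_mul (exp_pos _).le, ← exp_add]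
        congr 2
        field_simp
        ring

lemma measure_tsum_le_le (hind : iIndepFun X P) (hX : ∀ j, IsExponentialRV P (X j) (l j))
    (hl : ∀ j, 0 < l j) (hsum : Summable fun j => (l j)⁻¹) {L δ : ℝ} (hL : 0 < L)
    (hLl : ∀ j, L ≤ l j) (hδ : 0 ≤ δ) :
    P {ω | ∑' j, X j ω ≤ (1 - δ) * ∑' j, (l j)⁻¹} ≤
      ENNReal.ofReal (exp (-(δ ^ 2 * (L * ∑' j, (l j)⁻¹) / 8))) := by
  set m := ∑' j, (l j)⁻¹
  set t := δ * L / 4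
  have ht₀ : 0 ≤ t := by positivity
  have hm : 0 ≤ m := tsum_nonneg fun j => (inv_pos.2 (hl j)).le
  have hS : AEMeasurable (fun ω => -∑' j, X j ω) P :=
    (AEMeasurable.tsum fun j => (hX j).aemeasurable (hl j)).neg
  have hmgf := lintegral_exp_mul_tsum_le hind hX hl hsum (t := -t) (c := -t + t ^ 2 / L)
    (fun j => by linarith [hl j]) fun j => by
      rw [sub_neg_eq_add]
      exact div_add_le_exp_mul_inv hL (hLl j) ht₀
  calc P {ω | ∑' j, X j ω ≤ (1 - δ) * m}
      = P {ω | -((1 - δ) * m) ≤ -∑' j, X j ω} := by simp_rw [neg_le_neg_iff]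
    _ ≤ ENNReal.ofReal (exp (-(t * -((1 - δ) * m)))) *
          ∫⁻ ω, ENNReal.ofReal (exp (-t * ∑' j, X j ω)) ∂P := by
        simpa only [neg_mul, mul_neg] using measure_ge_le_exp_mul_lintegral hS (-((1 - δ) * m)) ht₀
    _ ≤ ENNReal.ofReal (exp (-(t * -((1 - δ) * m)))) *
          ENNReal.ofReal (exp ((-t + t ^ 2 / L) * m)) := by gcongr
    _ ≤ ENNReal.ofReal (exp (-(δ ^ 2 * (L * m) / 8))) := by
        rw [← ENNReal.ofReal_mul (exp_pos _).le, ← exp_add]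
        have hexponent :
            -(t * -((1 - δ) * m)) + (-t + t ^ 2 / L) * m = -(3 * δ ^ 2 * (L * m) / 16) := by
          field_simp
          ring
        gcongr
        rw [hexponent]
        nlinarith [mul_nonneg (sq_nonneg δ) (mul_nonneg hL.le hm)]

lemma measure_abs_tsum_div_sub_one_gt_le (hind : iIndepFun X P)
    (hX : ∀ j, IsExponentialRV P (X j) (l j)) (hl : ∀ j, 0 < l j)
    (hsum : Summable fun j => (l j)⁻¹) {L δ : ℝ} (hL : 0 < L) (hLl : ∀ j, L ≤ l j) (hδ : 0 ≤ δ)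
    (hδ₂ : δ ≤ 2) :
    P {ω | |(∑' j, X j ω) / ∑' j, (l j)⁻¹ - 1| > δ} ≤
      ENNReal.ofReal (2 * exp (-(δ ^ 2 * (L * ∑' j, (l j)⁻¹) / 8))) := by
  set m := ∑' j, (l j)⁻¹
  have hm : 0 < m := hsum.tsum_pos (fun j => (inv_pos.2 (hl j)).le) 0 (inv_pos.2 (hl 0))
  have hsplit : {ω | |(∑' j, X j ω) / m - 1| > δ} ⊆
      {ω | (1 + δ) * m ≤ ∑' j, X j ω} ∪ {ω | ∑' j, X j ω ≤ (1 - δ) * m} := by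
    intro ω (hω : δ < |(∑' j, X j ω) / m - 1|)
    rcases lt_abs.1 hω with hupper | hlower
    · exact Or.inl ((le_div_iff₀ hm).1 (by linarith))
    · exact Or.inr ((div_le_iff₀ hm).1 (by linarith))
  calc P {ω | |(∑' j, X j ω) / m - 1| > δ}
      ≤ P {ω | (1 + δ) * m ≤ ∑' j, X j ω} + P {ω | ∑' j, X j ω ≤ (1 - δ) * m} :=
        (measure_mono hsplit).trans (measure_union_le _ _)
    _ ≤ ENNReal.ofReal (exp (-(δ ^ 2 * (L * m) / 8))) +
          ENNReal.ofReal (exp (-(δ ^ 2 * (L * m) / 8))) :=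
        add_le_add (measure_tsum_ge_le hind hX hl hsum hL hLl hδ hδ₂)
          (measure_tsum_le_le hind hX hl hsum hL hLl hδ)
    _ = ENNReal.ofReal (2 * exp (-(δ ^ 2 * (L * m) / 8))) := by
        rw [two_mul, ENNReal.ofReal_add (exp_pos _).le (exp_pos _).le]

end ExponentialSeries

lemma summable_inv_of_rpow_le {α θ C : ℝ} {f : ℕ → ℝ} (hα : 1 < α) (hθ : 0 < θ) (hC : 0 < C)
    (hf : ∀ i : ℕ, C * (i + θ) ^ α ≤ f i) : Summable fun i => (f i)⁻¹ := by
  have hpos : ∀ i : ℕ, 0 < C * ((i : ℝ) + θ) ^ α := fun i => by positivity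
  refine Summable.of_nonneg_of_le (fun i => inv_nonneg.2 ((hpos i).trans_le (hf i)).le)
    (fun i => inv_anti₀ (hpos i) (hf i)) ?_
  refine (((summable_one_div_nat_add_rpow θ α).2 hα).mul_left C⁻¹).congr fun i => ?_
  rw [abs_of_pos (by positivity), mul_inv, one_div]

lemma natCast_div_le_tsum_inv {f : ℕ → ℝ} (hf : ∀ i, 0 < f i) (hsum : Summable fun i => (f i)⁻¹)
    {n : ℕ} {M : ℝ} (hM : ∀ i < n, f i ≤ M) : n / M ≤ ∑' i, (f i)⁻¹ :=
  calc (n : ℝ) / M = ∑ i ∈ Finset.range n, M⁻¹ := by simp [div_eq_mul_inv]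
    _ ≤ ∑ i ∈ Finset.range n, (f i)⁻¹ :=
        Finset.sum_le_sum fun i hi => inv_anti₀ (hf i) (hM i (Finset.mem_range.1 hi))
    _ ≤ ∑' i, (f i)⁻¹ := hsum.sum_le_tsum _ fun i _ => (inv_pos.2 (hf i)).le

lemma mul_tsum_inv_ge_of_rpow_bounds {α θ a b : ℝ} {f : ℕ → ℝ} (hα : 0 ≤ α) (hθ : 0 < θ)
    (ha : 0 < a) (hb : 0 < b) (hlow : ∀ i : ℕ, a * (i + θ) ^ α ≤ f i)
    (hup : ∀ i : ℕ, f i ≤ b * (i + θ) ^ α) (hsum : Summable fun i => (f i)⁻¹) (n : ℕ) :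
    a / (b * 2 ^ α) * n ≤ a * (n + θ) ^ α * ∑' j, (f (n + j))⁻¹ := by
  have hf : ∀ i, 0 < f i := fun i => lt_of_lt_of_le (by positivity) (hlow i)
  have hM : ∀ j < n, f (n + j) ≤ b * 2 ^ α * (n + θ) ^ α := fun j hj =>
    calc f (n + j) ≤ b * ((n + j : ℕ) + θ) ^ α := hup _
      _ ≤ b * (2 * (n + θ)) ^ α := by
          gcongr
          push_cast
          linarith [(Nat.cast_lt.2 hj : (j : ℝ) < n)]
      _ = b * 2 ^ α * (n + θ) ^ α := by rw [mul_rpow zero_le_two (by positivity), mul_assoc]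
  have hm := natCast_div_le_tsum_inv (fun j => hf (n + j))
    (hsum.comp_injective (add_right_injective n)) hM
  calc a / (b * 2 ^ α) * n = a * (n + θ) ^ α * (n / (b * 2 ^ α * (n + θ) ^ α)) := by
        field_simp
    _ ≤ a * (n + θ) ^ α * ∑' j, (f (n + j))⁻¹ := by gcongr

lemma eventually_two_mul_exp_le {K : ℝ} (hK : 0 < K) :
    ∀ᶠ n : ℕ in atTop, ∀ x, K * n ≤ x →
      2 * exp (-(((n : ℝ) ^ (-(1 : ℝ) / 4)) ^ 2 * x / 8)) ≤ exp (-(n : ℝ) ^ ((1 : ℝ) / 4)) := by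
  have hu : Tendsto (fun n : ℕ => (n : ℝ) ^ ((1 : ℝ) / 4)) atTop atTop :=
    (tendsto_rpow_atTop (by norm_num)).comp tendsto_natCast_atTop_atTop
  filter_upwards [hu.eventually_ge_atTop (8 * (1 + log 2) / K), hu.eventually_ge_atTop 1]
    with n hKu hu₁ x hx
  set u := (n : ℝ) ^ ((1 : ℝ) / 4)
  have hn : (n : ℝ) = u ^ 4 := by
    rw [← rpow_natCast, ← rpow_mul n.cast_nonneg]
    norm_num
  have hδ : (n : ℝ) ^ (-(1 : ℝ) / 4) = u⁻¹ := by rw [neg_div, rpow_neg n.cast_nonneg]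
  have hu₀ : 0 < u := by linarith
  have hquad : u + log 2 ≤ K * u ^ 2 / 8 := by
    rw [div_le_iff₀ hK] at hKu
    nlinarith [mul_le_mul_of_nonneg_right hKu hu₀.le, log_nonneg one_le_two]
  calc 2 * exp (-(((n : ℝ) ^ (-(1 : ℝ) / 4)) ^ 2 * x / 8))
      ≤ 2 * exp (-(K * u ^ 2 / 8)) := by
        have hKx : K * u ^ 2 ≤ ((n : ℝ) ^ (-(1 : ℝ) / 4)) ^ 2 * x :=
          calc K * u ^ 2 = (u⁻¹) ^ 2 * (K * n) := by rw [hn]; field_simp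
            _ ≤ ((n : ℝ) ^ (-(1 : ℝ) / 4)) ^ 2 * x := by rw [hδ]; gcongr
        gcongr 2 * exp ?_
        linarith
    _ = exp (log 2 + -(K * u ^ 2 / 8)) := by rw [exp_add, exp_log two_pos]
    _ ≤ exp (-u) := by gcongr; linarith

theorem exponential_tail_relative_concentration_general {Ω : Type*} [MeasurableSpace Ω]
    (P : Measure Ω)
    (α c₁ c₂ μ θ : ℝ) (hα : 1 < α) (hc₁ : 0 < c₁) (hc : c₁ ≤ c₂)
    (hμ : μ ∈ Set.Ioc (0 : ℝ) 1) (hθ : 0 < θ)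
    (F : ℝ → ℝ) (hF : ∀ x > (0 : ℝ), c₁ * x ^ α ≤ F x ∧ F x ≤ c₂ * x ^ α)
    (r : ℕ → Ω → ℝ)
    (hindep : iIndepFun r P)
    (hexp : ∀ j : ℕ, IsExponentialRV P (r j) (μ * F (j + θ)))
    (R : ℕ → Ω → ℝ) (hR : ∀ n ω, R n ω = ∑' j : ℕ, r (n + j) ω) :
    ∃ n₀ : ℕ, ∀ n : ℕ, n₀ < n →
      P {ω | |R n ω / (∫ ω', R n ω' ∂P) - 1| > (n : ℝ) ^ (-(1 : ℝ) / 4)} ≤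
        ENNReal.ofReal (Real.exp (-(n : ℝ) ^ ((1 : ℝ) / 4))) := by
  obtain ⟨hμ₀, -⟩ := hμ
  have hc₂ : 0 < c₂ := hc₁.trans_le hc
  set lam : ℕ → ℝ := fun i => μ * F (i + θ)
  have hlow : ∀ i : ℕ, μ * c₁ * (i + θ) ^ α ≤ lam i := fun i =>
    (mul_assoc μ c₁ _).trans_le (mul_le_mul_of_nonneg_left (hF _ (by positivity)).1 hμ₀.le)
  have hup : ∀ i : ℕ, lam i ≤ μ * c₂ * (i + θ) ^ α := fun i =>
    (mul_le_mul_of_nonneg_left (hF _ (by positivity)).2 hμ₀.le).trans_eq (mul_assoc μ c₂ _).symm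
  have hlam : ∀ i, 0 < lam i := fun i => lt_of_lt_of_le (by positivity) (hlow i)
  have hsum : Summable fun i => (lam i)⁻¹ := summable_inv_of_rpow_le hα hθ (by positivity) hlow
  obtain ⟨n₀, hn₀⟩ := eventually_atTop.1
    (eventually_two_mul_exp_le (K := μ * c₁ / (μ * c₂ * 2 ^ α)) (by positivity))
  refine ⟨n₀, fun n hn => ?_⟩
  set δ := (n : ℝ) ^ (-(1 : ℝ) / 4)
  have hδ : δ ≤ 2 := (rpow_le_one_of_one_le_of_nonpos (by exact_mod_cast n₀.zero_le.trans_lt hn)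
    (by norm_num)).trans one_le_two
  have hL : ∀ j, μ * c₁ * (n + θ) ^ α ≤ lam (n + j) := fun j =>
    le_trans (by gcongr; exact_mod_cast n.le_add_right j) (hlow (n + j))
  have hsum_n : Summable fun j => (lam (n + j))⁻¹ := hsum.comp_injective (add_right_injective n)
  have hmean : ∫ ω, R n ω ∂P = ∑' j, (lam (n + j))⁻¹ := by
    simp_rw [hR]
    exact integral_tsum_of_isExponentialRV (fun j => hexp (n + j)) (fun j => hlam _) hsum_n
  calc P {ω | |R n ω / (∫ ω', R n ω' ∂P) - 1| > δ}
      = P {ω | |(∑' j, r (n + j) ω) / ∑' j, (lam (n + j))⁻¹ - 1| > δ} := by simp_rw [hmean, hR]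
    _ ≤ ENNReal.ofReal (2 * exp (-(δ ^ 2 * (μ * c₁ * (n + θ) ^ α * ∑' j, (lam (n + j))⁻¹) / 8))) :=
        measure_abs_tsum_div_sub_one_gt_le (hindep.precomp (add_right_injective n))
          (fun j => hexp (n + j)) (fun j => hlam _) hsum_n (by positivity) hL (by positivity) hδ
    _ ≤ ENNReal.ofReal (exp (-(n : ℝ) ^ ((1 : ℝ) / 4))) :=
        ENNReal.ofReal_le_ofReal (hn₀ n hn.le _ (mul_tsum_inv_ge_of_rpow_bounds
          (by positivity) hθ (by positivity) (by positivity) hlow hup hsum n))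

/-- Let `α > 1`, `0 < c₁ ≤ c₂`, `μ ∈ (0,1]`, `θ > 0`, and
`c₁ x^α ≤ F x ≤ c₂ x^α` on `(0,∞)`.  Let `r j` be independent exponentials with mean
`1/(μ F(j+θ))` and `R n = ∑_{j≥n} r j`.  Then there is `n₀` such that for all `n > n₀`,
`P(|R n / E[R n] − 1| > n^{-1/4}) ≤ e^{-n^{1/4}}`. -/
theorem exponential_tail_relative_concentration {Ω : Type*} [MeasurableSpace Ω]
    (P : Measure Ω) [IsProbabilityMeasure P]
    (α c₁ c₂ μ θ : ℝ) (hα : 1 < α) (hc₁ : 0 < c₁) (hc : c₁ ≤ c₂)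
    (hμ : μ ∈ Set.Ioc (0 : ℝ) 1) (hθ : 0 < θ)
    (F : ℝ → ℝ) (hF : ∀ x > (0 : ℝ), c₁ * x ^ α ≤ F x ∧ F x ≤ c₂ * x ^ α)
    (r : ℕ → Ω → ℝ) (hmeas : ∀ j, Measurable (r j))
    (hindep : iIndepFun r P)
    (hexp : ∀ j : ℕ, IsExponentialRV P (r j) (μ * F (j + θ)))
    (R : ℕ → Ω → ℝ) (hR : ∀ n ω, R n ω = ∑' j : ℕ, r (n + j) ω) :
    ∃ n₀ : ℕ, ∀ n : ℕ, n₀ < n →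
      P {ω | |R n ω / (∫ ω', R n ω' ∂P) - 1| > (n : ℝ) ^ (-(1 : ℝ) / 4)} ≤
        ENNReal.ofReal (Real.exp (-(n : ℝ) ^ ((1 : ℝ) / 4))) :=
  exponential_tail_relative_concentration_general P α c₁ c₂ μ θ hα hc₁ hc hμ hθ F hF r hindep hexp R
    hR
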